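/- arXiv:2209.00361 — 4 statements merged into one kernel-verified Lean document; each statement's English description precedes it below -/
import Mathlib

section
/- Let A be a d×d real symmetric matrix with smallest eigenvalue λ_min < 0 and largest eigenvalue λ_max < 1. Then for every natural number k, the operator norm of A(I−A)^k is at most −λ_min·(1−λ_min)^k + 1/(k+1). -/
/-!
Diagonalising `A = U diag(λᵢ) Uᴴ` gives `A (1 - A)^k = U diag(λᵢ (1 - λᵢ)^k) Uᴴ`, whose operator
norm is `maxᵢ |λᵢ (1 - λᵢ)^k|`. Each `λᵢ` lies in `[λ_min, 1]`: the negative ones contribute at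
most `-λ_min (1 - λ_min)^k` by monotonicity, and every `λ ≤ 1` satisfies
`λ (1 - λ)^k ≤ 1 / (k + 1)` because `(1 - λ)^k (1 + kλ) ≤ 1`.
-/

open Matrix

theorem one_sub_pow_mul_one_add_mul_le_one {e : ℝ} (he : e ≤ 1) (k : ℕ) :
    (1 - e) ^ k * (1 + k * e) ≤ 1 := by
  induction k with
  | zero => simp
  | succ k ih =>
    have step : (1 - e) * (1 + (k + 1) * e) ≤ 1 + k * e := by
      nlinarith [sq_nonneg e, (k.cast_nonneg : (0 : ℝ) ≤ k)]
    calc (1 - e) ^ (k + 1) * (1 + ↑(k + 1) * e)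
        = (1 - e) ^ k * ((1 - e) * (1 + (k + 1) * e)) := by push_cast; ring
      _ ≤ (1 - e) ^ k * (1 + k * e) := by gcongr
      _ ≤ 1 := ih

theorem mul_one_sub_pow_le_one_div_succ {e : ℝ} (he : e ≤ 1) (k : ℕ) :
    e * (1 - e) ^ k ≤ 1 / ((k : ℝ) + 1) := by
  rw [le_div_iff₀ (by positivity)]
  calc e * (1 - e) ^ k * (k + 1) = (1 - e) ^ k * (k * e + e) := by ring
    _ ≤ (1 - e) ^ k * (1 + k * e) :=
      mul_le_mul_of_nonneg_left (by linarith) (pow_nonneg (by linarith) k)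
    _ ≤ 1 := one_sub_pow_mul_one_add_mul_le_one he k

theorem abs_mul_one_sub_pow_le {a e : ℝ} (ha : a ≤ 0) (hae : a ≤ e) (he : e ≤ 1) (k : ℕ) :
    |e * (1 - e) ^ k| ≤ -a * (1 - a) ^ k + 1 / ((k : ℝ) + 1) := by
  have hneg : 0 ≤ -a * (1 - a) ^ k := mul_nonneg (by linarith) (pow_nonneg (by linarith) k)
  have hpos : 0 < 1 / ((k : ℝ) + 1) := by positivity
  rw [abs_le]
  constructor
  · rcases le_or_gt e 0 with he₀ | he₀
    · have : -e * (1 - e) ^ k ≤ -a * (1 - a) ^ k := by gcongr; linarith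
      linarith
    · nlinarith [pow_nonneg (sub_nonneg.mpr he) k]
  · linarith [mul_one_sub_pow_le_one_div_succ he k]

namespace Matrix.IsHermitian

variable {n 𝕜 : Type*} [RCLike 𝕜] [Fintype n] [DecidableEq n] {A : Matrix n n 𝕜}

theorem mul_one_sub_pow_eq_cfc (hA : A.IsHermitian) (k : ℕ) :
    A * (1 - A) ^ k = cfc (fun x : ℝ => x * (1 - x) ^ k) A := by
  rw [cfc_mul (fun x => x) (fun x => (1 - x) ^ k) A, cfc_pow (fun x => 1 - x) k A,
    cfc_sub (fun _ => 1) (fun x => x) A, cfc_const_one ℝ A, cfc_id' ℝ A]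

open scoped Matrix.Norms.L2Operator in
theorem norm_toEuclideanCLM_cfc_le (hA : A.IsHermitian) {f : ℝ → ℝ} {c : ℝ} (hc : 0 ≤ c)
    (hf : ∀ i, |f (hA.eigenvalues i)| ≤ c) :
    ‖toEuclideanCLM (n := n) (𝕜 := 𝕜) (cfc f A)‖ ≤ c := by
  rw [← cstar_norm_def, hA.cfc_eq, IsHermitian.cfc, Unitary.conjStarAlgAut_apply, mul_assoc,
    CStarRing.norm_mem_unitary_mul _ hA.eigenvectorUnitary.2,
    CStarRing.norm_mul_mem_unitary _ (Unitary.star_mem hA.eigenvectorUnitary.2),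
    l2_opNorm_diagonal, pi_norm_le_iff_of_nonneg hc]
  intro i
  simpa using hf i

end Matrix.IsHermitian

theorem matrix_power_opNorm_bound {d : ℕ} (A : Matrix (Fin d) (Fin d) ℝ)
    (hA : A.IsHermitian) (lmin lmax : ℝ)
    (hmin : IsLeast (Set.range hA.eigenvalues) lmin)
    (hmax : IsGreatest (Set.range hA.eigenvalues) lmax)
    (hmin0 : lmin < 0) (hmax1 : lmax < 1) (k : ℕ) :
    ‖(Matrix.toEuclideanCLM (𝕜 := ℝ) (A * (1 - A) ^ k) :
        EuclideanSpace ℝ (Fin d) →L[ℝ] EuclideanSpace ℝ (Fin d))‖ ≤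
      -lmin * (1 - lmin) ^ k + 1 / ((k : ℝ) + 1) := by
  rw [hA.mul_one_sub_pow_eq_cfc k]
  refine hA.norm_toEuclideanCLM_cfc_le ?_ fun i => ?_
  · exact add_nonneg (mul_nonneg (by linarith) (pow_nonneg (by linarith) k)) (by positivity)
  · exact abs_mul_one_sub_pow_le hmin0.le (hmin.2 ⟨i, rfl⟩)
      ((hmax.2 ⟨i, rfl⟩).trans hmax1.le) k
end

section
/- If f : ℝ^d → ℝ is L-gradient Lipschitz (i.e., ‖∇f(x) − ∇f(y)‖ ≤ L‖x−y‖ for all x, y) and x' = x − η v + ξ with ‖ξ‖ ≤ r and η > 0, then f(x') ≤ f(x) + η‖∇f(x) − v‖² − (η/2)‖∇f(x)‖² − (1/(2η) − L/2)‖x' − x‖² + r²/η. -/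
/-!
Along the segment from `x` to `x'` the Lipschitz gradient gives the quadratic upper bound
`f x' ≤ f x + ⟪∇f x, x' - x⟫ + L/2 ‖x' - x‖²`. The inner product is then rewritten by
polarization, `2η⟪g, u⟫ = ‖η g + u‖² - η²‖g‖² - ‖u‖²` with `g = ∇f x`, `u = x' - x`, and
`η g + u = η (g - v) + ξ` is bounded by `‖a + b‖² ≤ 2‖a‖² + 2‖b‖²`.
-/

open Set

theorem image_one_le_of_deriv_sub_deriv_zero_le {φ φ' : ℝ → ℝ} {K : ℝ}
    (hφ : ∀ t, HasDerivAt φ (φ' t) t) (hφ' : ∀ t ∈ Ico (0 : ℝ) 1, φ' t - φ' 0 ≤ K * t) :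
    φ 1 ≤ φ 0 + φ' 0 + K / 2 := by
  have hB : ∀ t, HasDerivAt (fun t => φ 0 + t * φ' 0 + K / 2 * t ^ 2) (φ' 0 + K * t) t := by
    intro t
    refine ((((hasDerivAt_id t).mul_const (φ' 0)).const_add (φ 0)).add
      ((hasDerivAt_pow 2 t).const_mul (K / 2))).congr_deriv ?_
    simp only [Nat.cast_ofNat]
    ring
  have := image_le_of_deriv_right_le_deriv_boundary (a := 0) (b := 1)
    (fun t _ => (hφ t).continuousAt.continuousWithinAt)
    (fun t _ => (hφ t).hasDerivWithinAt) (by simp)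
    (fun t _ => (hB t).continuousAt.continuousWithinAt)
    (fun t _ => (hB t).hasDerivWithinAt) (fun t ht => by linarith [hφ' t ht])
    (right_mem_Icc.2 zero_le_one)
  simpa using this

variable {E : Type*} [NormedAddCommGroup E] [InnerProductSpace ℝ E]

theorem real_inner_eq_norm_smul_add_sq_div {η : ℝ} (hη : η ≠ 0) (g u : E) :
    inner ℝ g u = (‖η • g + u‖ ^ 2 - η ^ 2 * ‖g‖ ^ 2 - ‖u‖ ^ 2) / (2 * η) := by
  rw [norm_add_sq_real, norm_smul, real_inner_smul_left, mul_pow, Real.norm_eq_abs, sq_abs]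
  field_simp
  ring

theorem norm_smul_add_sq_le {F : Type*} [SeminormedAddCommGroup F] [NormedSpace ℝ F] {η r : ℝ}
    (hη : 0 ≤ η) (w : F) {ξ : F} (hξ : ‖ξ‖ ≤ r) :
    ‖η • w + ξ‖ ^ 2 ≤ 2 * η ^ 2 * ‖w‖ ^ 2 + 2 * r ^ 2 := by
  calc ‖η • w + ξ‖ ^ 2 ≤ (η * ‖w‖ + r) ^ 2 := by
        gcongr
        calc ‖η • w + ξ‖ ≤ ‖η • w‖ + ‖ξ‖ := norm_add_le _ _
          _ ≤ η * ‖w‖ + r := by rw [norm_smul, Real.norm_of_nonneg hη]; gcongr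
    _ ≤ 2 * ((η * ‖w‖) ^ 2 + r ^ 2) := add_sq_le
    _ = 2 * η ^ 2 * ‖w‖ ^ 2 + 2 * r ^ 2 := by ring

variable [CompleteSpace E]

theorem hasDerivAt_comp_add_smul {f : E → ℝ} (hf : Differentiable ℝ f) (x u : E) (t : ℝ) :
    HasDerivAt (fun t : ℝ => f (x + t • u)) (inner ℝ (gradient f (x + t • u)) u) t := by
  have hline : HasDerivAt (fun t : ℝ => x + t • u) u t := by
    simpa using ((hasDerivAt_id t).smul_const u).const_add x
  simpa [Function.comp_def] using
    (hf (x + t • u)).hasGradientAt.hasFDerivAt.comp_hasDerivAt t hline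

theorem le_add_inner_gradient_add_sq_of_lipschitz_gradient {f : E → ℝ} {L : ℝ}
    (hf : Differentiable ℝ f)
    (hlip : ∀ x y, ‖gradient f x - gradient f y‖ ≤ L * ‖x - y‖) (x y : E) :
    f y ≤ f x + inner ℝ (gradient f x) (y - x) + L / 2 * ‖y - x‖ ^ 2 := by
  have key := image_one_le_of_deriv_sub_deriv_zero_le (K := L * ‖y - x‖ ^ 2)
    (hasDerivAt_comp_add_smul hf x (y - x)) fun t ht => by
      calc inner ℝ (gradient f (x + t • (y - x))) (y - x)
            - inner ℝ (gradient f (x + (0 : ℝ) • (y - x))) (y - x)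
          = inner ℝ (gradient f (x + t • (y - x)) - gradient f x) (y - x) := by
            rw [zero_smul, add_zero, inner_sub_left]
        _ ≤ ‖gradient f (x + t • (y - x)) - gradient f x‖ * ‖y - x‖ := real_inner_le_norm _ _
        _ ≤ L * ‖t • (y - x)‖ * ‖y - x‖ := by
            gcongr
            simpa using hlip (x + t • (y - x)) x
        _ = L * ‖y - x‖ ^ 2 * t := by
            rw [norm_smul, Real.norm_of_nonneg ht.1]; ring
  simp only [zero_smul, add_zero, one_smul, add_sub_cancel] at key
  linarith

theorem descent_lemma {d : ℕ} (f : EuclideanSpace ℝ (Fin d) → ℝ) (L η r : ℝ)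
    (hdiff : Differentiable ℝ f)
    (hlip : ∀ x y, ‖gradient f x - gradient f y‖ ≤ L * ‖x - y‖)
    (hη : 0 < η) (x v ξ : EuclideanSpace ℝ (Fin d)) (hξ : ‖ξ‖ ≤ r)
    (x' : EuclideanSpace ℝ (Fin d)) (hx' : x' = x - η • v + ξ) :
    f x' ≤ f x + η * ‖gradient f x - v‖ ^ 2 - η / 2 * ‖gradient f x‖ ^ 2
      - (1 / (2 * η) - L / 2) * ‖x' - x‖ ^ 2 + r ^ 2 / η := by
  set g := gradient f x
  have hsmooth := le_add_inner_gradient_add_sq_of_lipschitz_gradient hdiff hlip x x'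
  have hstep : η • g + (x' - x) = η • (g - v) + ξ := by rw [hx']; module
  have hinner := real_inner_eq_norm_smul_add_sq_div hη.ne' g (x' - x)
  rw [hstep] at hinner
  have hnorm := norm_smul_add_sq_le hη.le (g - v) hξ
  have hbound : inner ℝ g (x' - x) ≤ η * ‖g - v‖ ^ 2 - η / 2 * ‖g‖ ^ 2
      - 1 / (2 * η) * ‖x' - x‖ ^ 2 + r ^ 2 / η := by
    rw [hinner, div_le_iff₀ (by positivity)]
    field_simp
    linarith
  linarith
end

section
/- Let A = (a₁,…,a_k) be fixed vectors in ℝ^d with ∑ a_i = 0, and let x₁,…,x_l (l ≤ k) be sampled uniformly at random without replacement from A. Then for each 1 ≤ l < k, the process Y_s = (1/(k−s))·∑_{i=1}^s x_i, for s = 0,…,l, is a martingale with respect to the filtration generated by x₁,…,x_s. -/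
/-!
Conditionally on the first `m` draws, the `k - m` unseen positions are exchangeable: swapping
two of them maps every event of `F_m` to itself. Since all `k` positions together sum to `0`,
each unseen position therefore has conditional mean `-S_m / (k - m)`, where `S_m` is the sum of
the first `m` draws. Hence `E[S_{m+1} | F_m] = (k - m - 1) / (k - m) • S_m`, which is the
martingale property of `S_m / (k - m)`.
-/

open MeasureTheory

noncomputable instance (k : ℕ) : MeasurableSpace (Equiv.Perm (Fin k)) := ⊤

/-- The filtration generated by the first `min s l` draws of a sample without
replacement (modeled by a uniformly random permutation). -/
def withoutReplacementFiltration (k l : ℕ) (hlk : l < k) :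
    Filtration ℕ (⊤ : MeasurableSpace (Equiv.Perm (Fin k))) where
  seq s := MeasurableSpace.comap
    (fun ω : Equiv.Perm (Fin k) => fun i : Fin (min s l) =>
      ω (Fin.castLE (le_trans (min_le_right s l) hlk.le) i)) inferInstance
  mono' := by
    intro s t hst
    have h1 : min s l ≤ min t l := min_le_min hst le_rfl
    have heq : (fun ω : Equiv.Perm (Fin k) => fun i : Fin (min s l) =>
          ω (Fin.castLE (le_trans (min_le_right s l) hlk.le) i))
        = (fun v : Fin (min t l) → Fin k => fun i : Fin (min s l) =>
            v (Fin.castLE h1 i)) ∘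
          (fun ω : Equiv.Perm (Fin k) => fun i : Fin (min t l) =>
            ω (Fin.castLE (le_trans (min_le_right t l) hlk.le) i)) := rfl
    dsimp only
    rw [heq, ← MeasurableSpace.comap_comp]
    exact MeasurableSpace.comap_mono
      ((measurable_pi_lambda _ (fun i => measurable_pi_apply _)).comap_le)
  le' := fun s => le_top

open Finset Equiv

instance (k : ℕ) : DiscreteMeasurableSpace (Perm (Fin k)) := ⟨fun _ => trivial⟩

theorem setIntegral_uniformOfFintype {α E : Type*} [Fintype α] [Nonempty α] [MeasurableSpace α]
    [MeasurableSingletonClass α] [NormedAddCommGroup E] [NormedSpace ℝ E] [CompleteSpace E]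
    (s : Finset α) (f : α → E) :
    ∫ x in s, f x ∂(PMF.uniformOfFintype α).toMeasure
      = (Fintype.card α : ℝ)⁻¹ • ∑ x ∈ s, f x := by
  rw [setIntegral_finset s Integrable.of_finite.integrableOn, smul_sum]
  refine sum_congr rfl fun x _ => ?_
  rw [measureReal_def, PMF.toMeasure_apply_singleton _ _ (measurableSet_singleton x),
    PMF.uniformOfFintype_apply, ENNReal.toReal_inv, ENNReal.toReal_natCast]

theorem sum_apply_eq_sum_apply_of_mul_swap_mem {α M : Type*} [DecidableEq α] [AddCommMonoid M]
    {Q : Finset (Perm α)} {p q : α} (hQ : ∀ ω ∈ Q, ω * swap p q ∈ Q) (g : α → M) :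
    ∑ ω ∈ Q, g (ω p) = ∑ ω ∈ Q, g (ω q) :=
  sum_nbij' (· * swap p q) (· * swap p q) hQ hQ (fun ω _ => by simp [mul_assoc])
    (fun ω _ => by simp [mul_assoc]) (fun ω _ => by simp)

section PartialSums

variable {E : Type*} {k : ℕ}

def firstValues (m : ℕ) (hm : m ≤ k) (ω : Perm (Fin k)) : Fin m → Fin k :=
  fun i => ω (Fin.castLE hm i)

theorem firstValues_mul_swap {m : ℕ} (hm : m ≤ k) (ω : Perm (Fin k)) {p q : Fin k}
    (hp : m ≤ p) (hq : m ≤ q) : firstValues m hm (ω * swap p q) = firstValues m hm ω := by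
  funext i
  simp only [firstValues, Perm.mul_apply]
  rw [swap_apply_of_ne_of_ne] <;> exact fun h => by rw [Fin.ext_iff] at h; simp at h; omega

theorem card_sub_nsmul_sum_apply_eq_neg [AddCommGroup E] {m : ℕ} (hm : m < k) (a : Fin k → E)
    (hsum : ∑ i, a i = 0) {Q : Finset (Perm (Fin k))}
    (hQ : ∀ ω ∈ Q, ∀ p q : Fin k, m ≤ p → m ≤ q → ω * swap p q ∈ Q) :
    (k - m) • ∑ ω ∈ Q, a (ω ⟨m, hm⟩) = -∑ ω ∈ Q, ∑ i : Fin m, a (ω (Fin.castLE hm.le i)) := by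
  obtain ⟨r, rfl⟩ := Nat.exists_eq_add_of_le hm.le
  have hsplit (ω : Perm (Fin (m + r))) :
      ∑ i : Fin m, a (ω (Fin.castAdd r i)) + ∑ j : Fin r, a (ω (Fin.natAdd m j)) = 0 := by
    rw [← Fin.sum_univ_add (fun i => a (ω i)), Equiv.sum_comp ω a, hsum]
  have htail (j : Fin r) : ∑ ω ∈ Q, a (ω (Fin.natAdd m j)) = ∑ ω ∈ Q, a (ω ⟨m, hm⟩) :=
    sum_apply_eq_sum_apply_of_mul_swap_mem
      (fun ω hω => hQ ω hω _ _ (by simp) le_rfl) a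
  calc (m + r - m) • ∑ ω ∈ Q, a (ω ⟨m, hm⟩)
      = ∑ j : Fin r, ∑ ω ∈ Q, a (ω (Fin.natAdd m j)) := by simp [htail]
    _ = ∑ ω ∈ Q, ∑ j : Fin r, a (ω (Fin.natAdd m j)) := sum_comm
    _ = _ := by
      rw [← sum_neg_distrib]
      exact sum_congr rfl fun ω _ => eq_neg_of_add_eq_zero_right (hsplit ω)

noncomputable def normalizedPartialSum [AddCommGroup E] [Module ℝ E] (a : Fin k → E) (m : ℕ)
    (hm : m ≤ k) (ω : Perm (Fin k)) : E :=
  ((k : ℝ) - m)⁻¹ • ∑ i : Fin m, a (firstValues m hm ω i)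

theorem normalizedPartialSum_congr [AddCommGroup E] [Module ℝ E] (a : Fin k → E) {m n : ℕ}
    (h : m = n) (hm : m ≤ k) (hn : n ≤ k) :
    normalizedPartialSum a m hm = normalizedPartialSum a n hn := by
  subst h; rfl

theorem sum_normalizedPartialSum_succ [AddCommGroup E] [Module ℝ E] {m : ℕ} (hm : m + 1 < k)
    (a : Fin k → E) (hsum : ∑ i, a i = 0) {Q : Finset (Perm (Fin k))}
    (hQ : ∀ ω ∈ Q, ∀ p q : Fin k, m ≤ p → m ≤ q → ω * swap p q ∈ Q) :
    ∑ ω ∈ Q, normalizedPartialSum a (m + 1) hm.le ω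
      = ∑ ω ∈ Q, normalizedPartialSum a m (by omega) ω := by
  set S := ∑ ω ∈ Q, ∑ i : Fin m, a (ω (Fin.castLE (by omega : m ≤ k) i))
  set T := ∑ ω ∈ Q, a (ω ⟨m, by omega⟩)
  have hmk : (m : ℝ) + 1 < k := by exact_mod_cast hm
  have hc : ((k : ℝ) - m) ≠ 0 := by linarith
  have hc' : ((k : ℝ) - m - 1) ≠ 0 := by linarith
  have hT : T = -(((k : ℝ) - m)⁻¹ • S) := by
    have h : (k - m) • T = -S := card_sub_nsmul_sum_apply_eq_neg (by omega) a hsum hQ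
    rw [← Nat.cast_smul_eq_nsmul ℝ, Nat.cast_sub (by omega)] at h
    rw [← smul_neg, ← h, smul_smul, inv_mul_cancel₀ hc, one_smul]
  calc ∑ ω ∈ Q, normalizedPartialSum a (m + 1) hm.le ω
      = ((k : ℝ) - m - 1)⁻¹ • (S + T) := by
        simp only [normalizedPartialSum, firstValues, Fin.sum_univ_castSucc, ← smul_sum,
          sum_add_distrib, Nat.cast_add, Nat.cast_one, sub_add_eq_sub_sub]
        rfl
    _ = ((k : ℝ) - m)⁻¹ • S := by
        rw [hT, ← sub_eq_add_neg]
        nth_rewrite 1 [← one_smul ℝ S]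
        rw [← sub_smul, smul_smul]
        congr 1
        field_simp
    _ = ∑ ω ∈ Q, normalizedPartialSum a m (by omega) ω := by
        simp only [normalizedPartialSum, firstValues, ← smul_sum]
        rfl

end PartialSums

section ConditionalExpectation

variable {E : Type*} [NormedAddCommGroup E] [NormedSpace ℝ E] {k : ℕ}

theorem stronglyMeasurable_normalizedPartialSum (a : Fin k → E) (m : ℕ) (hm : m ≤ k) :
    StronglyMeasurable[MeasurableSpace.comap (firstValues m hm) inferInstance]
      (normalizedPartialSum a m hm) :=
  (StronglyMeasurable.of_discrete (f := fun v : Fin m → Fin k =>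
      ((k : ℝ) - m)⁻¹ • ∑ i, a (v i))).comp_measurable (comap_measurable _)

theorem condExp_normalizedPartialSum_succ [CompleteSpace E] {m : ℕ} (hm : m + 1 < k)
    (a : Fin k → E) (hsum : ∑ i, a i = 0) :
    (PMF.uniformOfFintype (Perm (Fin k))).toMeasure[normalizedPartialSum a (m + 1) hm.le |
        MeasurableSpace.comap (firstValues m (by omega)) inferInstance]
      =ᵐ[(PMF.uniformOfFintype (Perm (Fin k))).toMeasure] normalizedPartialSum a m (by omega) := by
  refine (ae_eq_condExp_of_forall_setIntegral_eq le_top Integrable.of_finite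
    (fun _ _ _ => Integrable.of_finite.integrableOn) (fun A hA _ => ?_)
    (stronglyMeasurable_normalizedPartialSum a m _).aestronglyMeasurable).symm
  obtain ⟨T, -, rfl⟩ := MeasurableSpace.measurableSet_comap.mp hA
  set A := firstValues m (by omega) ⁻¹' T
  have hQ : ∀ ω ∈ A.toFinite.toFinset, ∀ p q : Fin k, m ≤ p → m ≤ q →
      ω * swap p q ∈ A.toFinite.toFinset := by
    intro ω hω p q hp hq
    simpa [A, firstValues_mul_swap _ ω hp hq] using hω
  rw [← A.toFinite.coe_toFinset, setIntegral_uniformOfFintype,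
    setIntegral_uniformOfFintype, sum_normalizedPartialSum_succ hm a hsum hQ]

end ConditionalExpectation

theorem martingale_without_replacement_general {d k l : ℕ} (hlk : l < k)
    (a : Fin k → EuclideanSpace ℝ (Fin d))
    (hsum : ∑ i, a i = 0) :
    Martingale
      (fun s (ω : Equiv.Perm (Fin k)) =>
        ((k : ℝ) - (min s l : ℕ))⁻¹ •
          ∑ i : Fin (min s l), a (ω (Fin.castLE (le_trans (min_le_right s l) hlk.le) i)))
      (withoutReplacementFiltration k l hlk)
      (PMF.uniformOfFintype (Equiv.Perm (Fin k))).toMeasure := by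
  have hle (s : ℕ) : min s l ≤ k := le_trans (min_le_right s l) hlk.le
  change Martingale (fun s => normalizedPartialSum a (min s l) (hle s)) _ _
  refine martingale_nat (fun s => stronglyMeasurable_normalizedPartialSum a _ _)
    (fun _ => Integrable.of_finite) fun s => ?_
  rcases lt_or_ge s l with hs | hs
  · rw [normalizedPartialSum_congr a (show min (s + 1) l = min s l + 1 by omega) _ (by omega)]
    exact (condExp_normalizedPartialSum_succ (by omega) a hsum).symm
  · rw [normalizedPartialSum_congr a (show min (s + 1) l = min s l by omega) _ (hle s)]
    exact .of_eq (condExp_of_stronglyMeasurable le_top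
      (stronglyMeasurable_normalizedPartialSum a _ _) Integrable.of_finite).symm

/-- the normalized partial sums of a sample without replacement from
vectors summing to zero form a martingale. -/
theorem martingale_without_replacement {d k l : ℕ} (hl : 1 ≤ l) (hlk : l < k)
    (a : Fin k → EuclideanSpace ℝ (Fin d))
    (hsum : ∑ i, a i = 0) :
    Martingale
      (fun s (ω : Equiv.Perm (Fin k)) =>
        ((k : ℝ) - (min s l : ℕ))⁻¹ •
          ∑ i : Fin (min s l), a (ω (Fin.castLE (le_trans (min_le_right s l) hlk.le) i)))
      (withoutReplacementFiltration k l hlk)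
      (PMF.uniformOfFintype (Equiv.Perm (Fin k))).toMeasure :=
  martingale_without_replacement_general hlk a hsum
end

section
/- Let v^t = (1/n)∑_{i=1}^n y_i^t be the SLEDGE gradient estimator, where for minibatches I^s ⊆ [n] of size b, y_i^t is updated as in the SAGA/SARAH hybrid rule. Then the estimation error admits the exact decomposition: v^t − ∇f(x^t) = (1/n)·∑_{s=1}^t [ (|Ĩ_s^t|/b)·∑_{i∈I^s}(∇f_i(x^s) − ∇f_i(x^{s−1})) − ∑_{i∈Ĩ_s^t}(∇f_i(x^s) − ∇f_i(x^{s−1})) ] + (1/n)·∑_{i∈Ĩ_1^t}(y_i^0 − ∇f_i(x^0)), where Ĩ_s^t = [n] \ (I^s ∪ … ∪ I^t). -/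
/-!
Fix an index `i` and write `e_t = y_i^t − ∇f_i(x^t)`. Sampling `i` at step `t` resets `e_t` to `0`;
otherwise `e_t = e_{t−1} + c_t − (∇f_i(x^t) − ∇f_i(x^{t−1}))`, where `c_t` is the common SARAH correction.
Unrolling back to the last step at which `i` was sampled, `e_t` is the sum of the increments
`c_s − (∇f_i(x^s) − ∇f_i(x^{s−1}))` over the steps `s` with `i ∈ Ĩ_s^t`, plus `e_0` if `i` was never
sampled. Summing over `i` and exchanging the sums gives the decomposition, the common corrections
contributing `|Ĩ_s^t| · c_s`.
-/

open Finset

section Unsampled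

variable {ι : Type*} [Fintype ι] [DecidableEq ι] (I : ℕ → Finset ι)

/-- The paper's `Ĩ_s^t`. -/
def unsampled (s t : ℕ) : Finset ι :=
  univ \ (Icc s t).biUnion I

variable {I}

theorem unsampled_of_lt {s t : ℕ} (h : t < s) : unsampled I s t = univ := by
  simp [unsampled, Icc_eq_empty_of_lt h]

theorem notMem_unsampled_of_mem {s t : ℕ} {i : ι} (hs : s ≤ t) (hi : i ∈ I t) :
    i ∉ unsampled I s t := by
  simp only [unsampled, mem_sdiff, mem_univ, true_and, not_not, mem_biUnion, mem_Icc]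
  exact ⟨t, ⟨hs, le_rfl⟩, hi⟩

theorem mem_unsampled_succ_right_iff {s t : ℕ} {i : ι} (hi : i ∉ I (t + 1)) :
    i ∈ unsampled I s (t + 1) ↔ i ∈ unsampled I s t := by
  simp only [unsampled, mem_sdiff, mem_univ, true_and, mem_biUnion, mem_Icc, not_exists, not_and]
  refine ⟨fun h u hu => h u ⟨hu.1, hu.2.trans t.le_succ⟩, fun h u hu => ?_⟩
  rcases hu.2.lt_or_eq with hut | rfl
  · exact h u ⟨hu.1, Nat.lt_succ_iff.mp hut⟩
  · exact hi

end Unsampled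

section Decomposition

variable {ι E : Type*} [Fintype ι] [DecidableEq ι] [AddCommGroup E]
  {I : ℕ → Finset ι} {g y : ℕ → ι → E} {c : ℕ → E}

theorem sub_eq_sum_unsampled
    (hy : ∀ s, 1 ≤ s → ∀ i, y s i = if i ∈ I s then g s i else y (s - 1) i + c s)
    (t : ℕ) (i : ι) :
    y t i - g t i =
      ∑ s ∈ Icc 1 t, (if i ∈ unsampled I s t then c s - (g s i - g (s - 1) i) else 0) +
        if i ∈ unsampled I 1 t then y 0 i - g 0 i else 0 := by
  induction t with
  | zero => simp [unsampled_of_lt zero_lt_one]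
  | succ t ih =>
    have hstep := hy (t + 1) t.succ_pos i
    rw [Nat.add_sub_cancel] at hstep
    by_cases hi : i ∈ I (t + 1)
    · have hzero : ∀ s ∈ Icc 1 (t + 1),
          (if i ∈ unsampled I s (t + 1) then c s - (g s i - g (s - 1) i) else 0) = 0 :=
        fun s hs => if_neg (notMem_unsampled_of_mem (mem_Icc.mp hs).2 hi)
      rw [hstep, if_pos hi, sub_self, sum_eq_zero hzero,
        if_neg (notMem_unsampled_of_mem t.succ_pos hi), add_zero]
    · simp_rw [mem_unsampled_succ_right_iff hi]
      rw [hstep, if_neg hi, sum_Icc_succ_top (Nat.le_add_left 1 t), unsampled_of_lt t.lt_succ_self,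
        if_pos (mem_univ i), Nat.add_sub_cancel,
        show y t i + c (t + 1) - g (t + 1) i = (y t i - g t i) + (c (t + 1) - (g (t + 1) i - g t i))
          by abel, ih]
      abel

theorem sum_sub_eq_sum_unsampled
    (hy : ∀ s, 1 ≤ s → ∀ i, y s i = if i ∈ I s then g s i else y (s - 1) i + c s) (t : ℕ) :
    ∑ i, (y t i - g t i) =
      ∑ s ∈ Icc 1 t, ((unsampled I s t).card • c s -
          ∑ i ∈ unsampled I s t, (g s i - g (s - 1) i)) +
        ∑ i ∈ unsampled I 1 t, (y 0 i - g 0 i) := by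
  simp_rw [sub_eq_sum_unsampled hy t, sum_add_distrib]
  rw [sum_comm]
  simp_rw [sum_ite_mem, univ_inter, sum_sub_distrib, sum_const]

end Decomposition

theorem sledge_error_decomposition_general {d n b : ℕ}
    (f : Fin n → EuclideanSpace ℝ (Fin d) → ℝ)
    (t : ℕ)
    (I : ℕ → Finset (Fin n))
    (x : ℕ → EuclideanSpace ℝ (Fin d))
    (y : ℕ → Fin n → EuclideanSpace ℝ (Fin d))
    (hy : ∀ s, 1 ≤ s → ∀ i, y s i =
      if i ∈ I s then gradient (f i) (x s)
      else y (s - 1) i +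
        (b : ℝ)⁻¹ • ∑ j ∈ I s, (gradient (f j) (x s) - gradient (f j) (x (s - 1)))) :
    (n : ℝ)⁻¹ • ∑ i, y t i - (n : ℝ)⁻¹ • ∑ i, gradient (f i) (x t) =
      (n : ℝ)⁻¹ • ∑ s ∈ Finset.Icc 1 t,
        (((((Finset.univ \ (Finset.Icc s t).biUnion I).card : ℝ) / b) •
            ∑ i ∈ I s, (gradient (f i) (x s) - gradient (f i) (x (s - 1))))
          - ∑ i ∈ Finset.univ \ (Finset.Icc s t).biUnion I,
              (gradient (f i) (x s) - gradient (f i) (x (s - 1))))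
      + (n : ℝ)⁻¹ • ∑ i ∈ Finset.univ \ (Finset.Icc 1 t).biUnion I,
          (y 0 i - gradient (f i) (x 0)) := by
  have key := sum_sub_eq_sum_unsampled (g := fun s i => gradient (f i) (x s))
    (c := fun s => (b : ℝ)⁻¹ • ∑ j ∈ I s, (gradient (f j) (x s) - gradient (f j) (x (s - 1))))
    hy t
  simp only [unsampled, ← Nat.cast_smul_eq_nsmul ℝ, smul_smul, ← div_eq_mul_inv] at key
  rw [← smul_sub, ← sum_sub_distrib, key, smul_add]

theorem sledge_error_decomposition {d n b : ℕ}
    (f : Fin n → EuclideanSpace ℝ (Fin d) → ℝ)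
    (hdiff : ∀ i, Differentiable ℝ (f i))
    (t : ℕ) (ht : 1 ≤ t)
    (I : ℕ → Finset (Fin n)) (hcard : ∀ s, (I s).card = b)
    (x : ℕ → EuclideanSpace ℝ (Fin d))
    (y : ℕ → Fin n → EuclideanSpace ℝ (Fin d))
    (hy : ∀ s, 1 ≤ s → ∀ i, y s i =
      if i ∈ I s then gradient (f i) (x s)
      else y (s - 1) i +
        (b : ℝ)⁻¹ • ∑ j ∈ I s, (gradient (f j) (x s) - gradient (f j) (x (s - 1)))) :
    (n : ℝ)⁻¹ • ∑ i, y t i - (n : ℝ)⁻¹ • ∑ i, gradient (f i) (x t) =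
      (n : ℝ)⁻¹ • ∑ s ∈ Finset.Icc 1 t,
        (((((Finset.univ \ (Finset.Icc s t).biUnion I).card : ℝ) / b) •
            ∑ i ∈ I s, (gradient (f i) (x s) - gradient (f i) (x (s - 1))))
          - ∑ i ∈ Finset.univ \ (Finset.Icc s t).biUnion I,
              (gradient (f i) (x s) - gradient (f i) (x (s - 1))))
      + (n : ℝ)⁻¹ • ∑ i ∈ Finset.univ \ (Finset.Icc 1 t).biUnion I,
          (y 0 i - gradient (f i) (x 0)) :=
  sledge_error_decomposition_general f t I x y hy
end
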